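/- Let X ⊆ ℝ^d be 1-dense, c ∈ ℝ^d, y ∈ ℝ^d a point at distance at most 1 from conv(X ∩ B(c, 1)), and suppose x_1, …, x_k ∈ X ∩ B(c, 1) are points whose convex hull's 1-neighborhood contains y. Then there exists an index i such that ‖y − x_i‖ ≤ √2. (This is the key covering step applied to 1-dense sets: any point within distance 1 of the convex hull of finitely many points of X lying in a common unit ball is within √2 of one of those points.) -/

import Mathlib

/-!
The function `z ↦ ‖y - z‖² - ‖c - z‖²` is affine, so on the convex hull of the `x i` it attains
its minimum at some vertex `x i`. Comparing with its value at the point `p` of the hull nearest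
to `y` gives `‖y - x i‖² ≤ ‖y - p‖² + ‖c - x i‖² - ‖c - p‖² ≤ 1 + 1`.
-/

/-- A set `X ⊆ ℝ^d` is 1-dense if every point of `ℝ^d` is at distance `< 1` from `X`. -/
def IsOneDense {d : ℕ} (X : Set (EuclideanSpace ℝ (Fin d))) : Prop :=
  ∀ y : EuclideanSpace ℝ (Fin d), ∃ x ∈ X, ‖y - x‖ < 1

open Metric

section

variable {E : Type*} [NormedAddCommGroup E] [InnerProductSpace ℝ E]

lemma norm_sub_sq_sub_norm_sub_sq (y c z : E) :
    ‖y - z‖ ^ 2 - ‖c - z‖ ^ 2 = ‖y‖ ^ 2 - ‖c‖ ^ 2 - 2 * inner ℝ (y - c) z := by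
  rw [norm_sub_sq_real, norm_sub_sq_real, inner_sub_left]
  ring

lemma concaveOn_norm_sub_sq_sub_norm_sub_sq (y c : E) :
    ConcaveOn ℝ Set.univ fun z => ‖y - z‖ ^ 2 - ‖c - z‖ ^ 2 := by
  have h := (LinearMap.concaveOn ((-2 : ℝ) • innerₛₗ ℝ (y - c)) convex_univ).add_const
    (‖y‖ ^ 2 - ‖c‖ ^ 2)
  refine h.congr fun z _ => ?_
  simp only [Pi.add_apply, innerₛₗ_apply_apply, LinearMap.smul_apply, smul_eq_mul,
    norm_sub_sq_sub_norm_sub_sq]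
  ring

lemma exists_norm_sub_sq_le_of_mem_convexHull {s : Set E} {c p : E} {r : ℝ}
    (hs : s ⊆ closedBall c r) (hp : p ∈ convexHull ℝ s) (y : E) :
    ∃ x ∈ s, ‖y - x‖ ^ 2 ≤ ‖y - p‖ ^ 2 + r ^ 2 := by
  obtain ⟨x, hxs, hx⟩ := (concaveOn_norm_sub_sq_sub_norm_sub_sq y c).exists_le_of_mem_convexHull
    (Set.subset_univ s) hp
  have hxc : ‖c - x‖ ≤ r := by simpa [dist_eq_norm'] using hs hxs
  refine ⟨x, hxs, ?_⟩
  nlinarith [norm_nonneg (c - x), norm_nonneg (c - p)]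

end

theorem stmt16_general (d k : ℕ) (hk : 0 < k)
    (X : Set (EuclideanSpace ℝ (Fin d)))
    (c y : EuclideanSpace ℝ (Fin d))
    (x : Fin k → EuclideanSpace ℝ (Fin d))
    (hx : ∀ i, x i ∈ X ∩ Metric.closedBall c 1)
    (hyx : Metric.infDist y (convexHull ℝ (Set.range x)) ≤ 1) :
    ∃ i, ‖y - x i‖ ≤ Real.sqrt 2 := by
  obtain ⟨p, hp, hyp⟩ :=
    ((Set.finite_range x).isCompact_convexHull (𝕜 := ℝ)).exists_infDist_eq_dist
      ((Set.range_nonempty_iff_nonempty.2 ⟨⟨0, hk⟩⟩).convexHull) y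
  have hyp_le : ‖y - p‖ ≤ 1 := by rwa [← dist_eq_norm, ← hyp]
  have hxc : Set.range x ⊆ closedBall c 1 := Set.range_subset_iff.2 fun i => (hx i).2
  obtain ⟨_, ⟨i, rfl⟩, hi⟩ := exists_norm_sub_sq_le_of_mem_convexHull hxc hp y
  refine ⟨i, Real.le_sqrt_of_sq_le ?_⟩
  nlinarith [norm_nonneg (y - p)]

theorem stmt16 (d k : ℕ) (hk : 0 < k)
    (X : Set (EuclideanSpace ℝ (Fin d))) (hX : IsOneDense X)
    (c y : EuclideanSpace ℝ (Fin d))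
    (hy : Metric.infDist y (convexHull ℝ (X ∩ Metric.closedBall c 1)) ≤ 1)
    (x : Fin k → EuclideanSpace ℝ (Fin d))
    (hx : ∀ i, x i ∈ X ∩ Metric.closedBall c 1)
    (hyx : Metric.infDist y (convexHull ℝ (Set.range x)) ≤ 1) :
    ∃ i, ‖y - x i‖ ≤ Real.sqrt 2 :=
  stmt16_general d k hk X c y x hx hyx
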